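/- arXiv:2505.18599 — 4 statements merged into one kernel-verified Lean document; each statement's English description precedes it below -/
import Mathlib

section
/- Define characters χ_{η,φ} : Z^n × Z^n → K^× by χ_{η,φ}(η',φ') = ⟨ω'_η, ω_{φ'}⟩⟨ω'_{η'}, ω_φ⟩ where ⟨ω'_i, ω_j⟩ = q^{d_j a_{ji}} q_{ji}, extended bimultiplicatively, with q, q_{ij} (i<j) algebraically independent non-roots of unity and DA invertible over Q. Then χ_{η,φ} = χ_{η',φ'} implies (η,φ) = (η',φ'). -/
/-!
Write `B = DA`. Expanding the product, `⟨ω'_η, ω_φ⟩ = q ^ ((B η) ⬝ φ) · ∏ q_{ij} ^ c_{ij}`, and by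
skew-symmetry of the `q_{ij}` the second factor is a monomial in the `q_{ij}` with `i < j`. Algebraic
independence therefore reads off the exponent of `q` from a pairing value. Evaluating
`χ_{η,φ} = χ_{η',φ'}` at `(0, ψ)` and at `(ζ, 0)` gives `(B η) ⬝ ψ = (B η') ⬝ ψ` and
`(B ζ) ⬝ φ = (B ζ) ⬝ φ'` for all `ψ`, `ζ`, so `B η = B η'` and `Bᵀ φ = Bᵀ φ'`, and `det B ≠ 0`
finishes.
-/

/-- The pairing `⟨ω'_η, ω_φ⟩ = ∏_{i,j} (q^{d_j a_{ji}} q_{ji})^{η_i φ_j}`. -/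
noncomputable def OYpair {K : Type*} [Field K] (n : ℕ) (q : Kˣ) (qm : Fin n → Fin n → Kˣ)
    (d : Fin n → ℤ) (A : Matrix (Fin n) (Fin n) ℤ) (η φ : Fin n → ℤ) : Kˣ :=
  ∏ i, ∏ j, (q ^ (d j * A j i) * qm j i) ^ (η i * φ j)

open scoped Matrix

theorem Finset.prod_zpow_eq_zpow_sum {G ι : Type*} [CommGroup G] (g : G) (s : Finset ι)
    (f : ι → ℤ) : ∏ i ∈ s, g ^ f i = g ^ ∑ i ∈ s, f i := by
  induction s using Finset.cons_induction with
  | empty => simp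
  | cons a s ha ih => rw [Finset.prod_cons, Finset.sum_cons, ih, zpow_add]

theorem Finset.prod_prod_zpow_eq_prod_prod_lt {G ι : Type*} [CommGroup G] [Fintype ι]
    [LinearOrder ι] {x : ι → ι → G} (hdiag : ∀ i, x i i = 1) (hskew : ∀ i j, x i j * x j i = 1)
    (c : ι → ι → ℤ) :
    ∏ i, ∏ j, x i j ^ c i j = ∏ i, ∏ j, if i < j then x i j ^ (c i j - c j i) else 1 := by
  have hinv : ∀ i j, x j i = (x i j)⁻¹ := fun i j => eq_inv_of_mul_eq_one_right (hskew i j)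
  have hsplit : ∀ i j, x i j ^ c i j =
      (if i < j then x i j ^ c i j else 1) * (if j < i then x i j ^ c i j else 1) := by
    intro i j
    rcases lt_trichotomy i j with hlt | rfl | hgt
    · simp [hlt, hlt.asymm]
    · simp [hdiag]
    · simp [hgt, hgt.asymm]
  have hswap : ∏ i, ∏ j, (if j < i then x i j ^ c i j else 1) =
      ∏ i, ∏ j, if i < j then x i j ^ (-c j i) else 1 := by
    rw [Finset.prod_comm]
    refine Finset.prod_congr rfl fun i _ => Finset.prod_congr rfl fun j _ => ?_
    split_ifs <;> simp [hinv i j]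
  calc ∏ i, ∏ j, x i j ^ c i j
      = (∏ i, ∏ j, if i < j then x i j ^ c i j else 1) *
          ∏ i, ∏ j, (if j < i then x i j ^ c i j else 1) := by
        simp only [← Finset.prod_mul_distrib, ← hsplit]
    _ = ∏ i, ∏ j, if i < j then x i j ^ (c i j - c j i) else 1 := by
        rw [hswap]
        simp only [← Finset.prod_mul_distrib]
        refine Finset.prod_congr rfl fun i _ => Finset.prod_congr rfl fun j _ => ?_
        split_ifs <;> simp [zpow_sub]

section AlgebraicIndependence

variable {K : Type*} [Field K] {n : ℕ} {q : Kˣ} {qm : Fin n → Fin n → Kˣ}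

theorem exponent_eq_zero_of_zpow_mul_prod_prod_eq_one (hqdiag : ∀ i, qm i i = 1)
    (hqskew : ∀ i j, qm i j * qm j i = 1)
    (hind : ∀ (a : ℤ) (b : Fin n → Fin n → ℤ),
      q ^ a * ∏ i, ∏ j, (if i < j then qm i j ^ b i j else 1) = 1 →
      a = 0 ∧ ∀ i j, i < j → b i j = 0)
    {a : ℤ} {c : Fin n → Fin n → ℤ} (h : q ^ a * ∏ i, ∏ j, qm i j ^ c i j = 1) : a = 0 := by
  rw [Finset.prod_prod_zpow_eq_prod_prod_lt hqdiag hqskew] at h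
  exact (hind a _ h).1

theorem exponent_eq_of_zpow_mul_prod_prod_eq (hqdiag : ∀ i, qm i i = 1)
    (hqskew : ∀ i j, qm i j * qm j i = 1)
    (hind : ∀ (a : ℤ) (b : Fin n → Fin n → ℤ),
      q ^ a * ∏ i, ∏ j, (if i < j then qm i j ^ b i j else 1) = 1 →
      a = 0 ∧ ∀ i j, i < j → b i j = 0)
    {a a' : ℤ} {c c' : Fin n → Fin n → ℤ}
    (h : q ^ a * ∏ i, ∏ j, qm i j ^ c i j = q ^ a' * ∏ i, ∏ j, qm i j ^ c' i j) : a = a' := by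
  refine sub_eq_zero.mp (exponent_eq_zero_of_zpow_mul_prod_prod_eq_one hqdiag hqskew hind
    (c := c - c') ?_)
  simp only [Pi.sub_apply, zpow_sub, ← div_eq_mul_inv, Finset.prod_div_distrib]
  rw [div_mul_div_comm, h, div_self']

end AlgebraicIndependence

section Pairing

variable {K : Type*} [Field K] {n : ℕ} (q : Kˣ) (qm : Fin n → Fin n → Kˣ)
  (d : Fin n → ℤ) (A : Matrix (Fin n) (Fin n) ℤ)

theorem OYpair_eq_zpow_mul_prod_prod (η φ : Fin n → ℤ) :
    OYpair n q qm d A η φ =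
      q ^ ((Matrix.of fun i j => d i * A i j) *ᵥ η ⬝ᵥ φ) * ∏ i, ∏ j, qm i j ^ (φ i * η j) := by
  rw [OYpair, dotProduct_comm]
  simp_rw [mul_zpow, ← zpow_mul, Finset.prod_mul_distrib, Finset.prod_zpow_eq_zpow_sum]
  congr 1
  · rw [Matrix.dot_mulVec_eq_sum_sum]
    refine congrArg _ (Finset.sum_congr rfl fun i _ => Finset.sum_congr rfl fun j _ => ?_)
    simp only [Matrix.of_apply]
    ring
  · rw [Finset.prod_comm]
    simp only [mul_comm (η _)]

theorem OYpair_zero_left (φ : Fin n → ℤ) : OYpair n q qm d A 0 φ = 1 := by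
  simp [OYpair]

theorem OYpair_zero_right (η : Fin n → ℤ) : OYpair n q qm d A η 0 = 1 := by
  simp [OYpair]

theorem OYpair_exponent_eq_of_OYpair_eq (hqdiag : ∀ i, qm i i = 1)
    (hqskew : ∀ i j, qm i j * qm j i = 1)
    (hind : ∀ (a : ℤ) (b : Fin n → Fin n → ℤ),
      q ^ a * ∏ i, ∏ j, (if i < j then qm i j ^ b i j else 1) = 1 →
      a = 0 ∧ ∀ i j, i < j → b i j = 0)
    {η φ η' φ' : Fin n → ℤ} (h : OYpair n q qm d A η φ = OYpair n q qm d A η' φ') :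
    (Matrix.of fun i j => d i * A i j) *ᵥ η ⬝ᵥ φ =
      (Matrix.of fun i j => d i * A i j) *ᵥ η' ⬝ᵥ φ' := by
  rw [OYpair_eq_zpow_mul_prod_prod, OYpair_eq_zpow_mul_prod_prod] at h
  exact exponent_eq_of_zpow_mul_prod_prod_eq hqdiag hqskew hind h

end Pairing

theorem stmt4_general {K : Type*} [Field K] (n : ℕ) (q : Kˣ) (qm : Fin n → Fin n → Kˣ)
    (hqdiag : ∀ i, qm i i = 1) (hqskew : ∀ i j, qm i j * qm j i = 1)
    (hind : ∀ (a : ℤ) (b : Fin n → Fin n → ℤ),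
      q ^ a * ∏ i, ∏ j, (if i < j then qm i j ^ b i j else 1) = 1 →
      a = 0 ∧ ∀ i j, i < j → b i j = 0)
    (d : Fin n → ℤ)
    (A : Matrix (Fin n) (Fin n) ℤ)
    (hDA : (Matrix.of fun i j => d i * A i j).det ≠ 0)
    (η φ η' φ' : Fin n → ℤ)
    (h : ∀ ζ ψ : Fin n → ℤ,
      OYpair n q qm d A η ψ * OYpair n q qm d A ζ φ =
      OYpair n q qm d A η' ψ * OYpair n q qm d A ζ φ') :
    η = η' ∧ φ = φ' := by
  have hleft (ψ : Fin n → ℤ) : OYpair n q qm d A η ψ = OYpair n q qm d A η' ψ := by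
    simpa [OYpair_zero_left] using h 0 ψ
  have hright (ζ : Fin n → ℤ) : OYpair n q qm d A ζ φ = OYpair n q qm d A ζ φ' := by
    simpa [OYpair_zero_right] using h ζ 0
  constructor
  · exact Matrix.mulVec_injective_of_det_ne_zero hDA
      (dotProduct_eq _ _ fun ψ =>
        OYpair_exponent_eq_of_OYpair_eq q qm d A hqdiag hqskew hind (hleft ψ))
  · refine Matrix.mulVec_injective_of_det_ne_zero (by rwa [Matrix.det_transpose])
      (dotProduct_eq _ _ fun ζ => ?_)
    rw [Matrix.mulVec_transpose, Matrix.mulVec_transpose, ← Matrix.dotProduct_mulVec,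
      ← Matrix.dotProduct_mulVec, dotProduct_comm φ, dotProduct_comm φ']
    exact OYpair_exponent_eq_of_OYpair_eq q qm d A hqdiag hqskew hind (hright ζ)

/-- the characters `χ_{η,φ}(η',φ') = ⟨ω'_η, ω_{φ'}⟩⟨ω'_{η'}, ω_φ⟩` are
pairwise distinct: `χ_{η,φ} = χ_{η'',φ''}` implies `(η,φ) = (η'',φ'')`. -/
theorem stmt4 {K : Type*} [Field K] (n : ℕ) (q : Kˣ) (qm : Fin n → Fin n → Kˣ)
    (hqdiag : ∀ i, qm i i = 1) (hqskew : ∀ i j, qm i j * qm j i = 1)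
    (hind : ∀ (a : ℤ) (b : Fin n → Fin n → ℤ),
      q ^ a * ∏ i, ∏ j, (if i < j then qm i j ^ b i j else 1) = 1 →
      a = 0 ∧ ∀ i j, i < j → b i j = 0)
    (d : Fin n → ℤ) (hd : ∀ i, 0 < d i)
    (A : Matrix (Fin n) (Fin n) ℤ) (hsym : ∀ i j, d i * A i j = d j * A j i)
    (hDA : (Matrix.of fun i j => d i * A i j).det ≠ 0)
    (η φ η' φ' : Fin n → ℤ)
    (h : ∀ ζ ψ : Fin n → ℤ,
      OYpair n q qm d A η ψ * OYpair n q qm d A ζ φ =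
      OYpair n q qm d A η' ψ * OYpair n q qm d A ζ φ') :
    η = η' ∧ φ = φ' :=
  stmt4_general n q qm hqdiag hqskew hind d A hDA η φ η' φ' h
end

section
/- Define ϱ^{λ,μ}(ω'_η ω_φ) = q^{(φ-η)^T D A λ} (∏_{i,j} q_{ij}^{-λ_i(φ+η)_j}) · q^{(η+φ, μ)} for λ, μ ∈ Z^n, with q, {q_{ij}: i<j} algebraically independent non-roots of unity and DA invertible. If ϱ^{λ,μ}(ω'_η ω_φ) = 1 for all λ, μ ∈ Z^n, then η = φ = 0. -/
/-
Specialising `λ = 0` leaves `q ^ (η + φ, μ) = 1` for all `μ`. Since `q` is not a root of unity,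
`(η + φ, μ) = 0` for all `μ`, and nondegeneracy of `DA` gives `η + φ = 0`. The product over the
`q_ij` then vanishes identically, so specialising `μ = 0` leaves `q ^ ((φ - η)ᵀ DA λ) = 1` for all
`λ`, whence `φ - η = 0` in the same way.
-/

/-- `ϱ^{λ,μ}(ω'_η ω_φ) = q^{(φ-η)ᵀDAλ} (∏_{i,j} q_{ij}^{-λ_i(φ+η)_j}) q^{(η+φ,μ)}`,
with `(·,·)` the form with Gram matrix `DA`. -/
noncomputable def rhoLM {K : Type*} [Field K] (n : ℕ) (q : Kˣ) (qm : Fin n → Fin n → Kˣ)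
    (d : Fin n → ℤ) (A : Matrix (Fin n) (Fin n) ℤ) (lam mu η φ : Fin n → ℤ) : Kˣ :=
  q ^ (∑ i, ∑ j, (φ i - η i) * (d i * A i j * lam j)) *
    (∏ i, ∏ j, qm i j ^ (-(lam i) * (φ j + η j))) *
    q ^ (∑ i, ∑ j, (η i + φ i) * (d i * A i j * mu j))

section rhoLM

open Matrix

variable {K : Type*} [Field K] {n : ℕ} (q : Kˣ) (qm : Fin n → Fin n → Kˣ)
  (d : Fin n → ℤ) (A : Matrix (Fin n) (Fin n) ℤ)

lemma sum_sum_mul_eq_dotProduct_mulVec (v w : Fin n → ℤ) :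
    ∑ i, ∑ j, v i * (d i * A i j * w j) = v ⬝ᵥ (of fun i j => d i * A i j) *ᵥ w := by
  simp only [dotProduct, mulVec, of_apply, Finset.mul_sum, mul_assoc]

lemma rhoLM_zero_left (mu η φ : Fin n → ℤ) :
    rhoLM n q qm d A 0 mu η φ = q ^ ((η + φ) ⬝ᵥ (of fun i j => d i * A i j) *ᵥ mu) := by
  rw [rhoLM, ← sum_sum_mul_eq_dotProduct_mulVec]
  simp only [Pi.zero_apply, Pi.add_apply, mul_zero, neg_zero, zero_mul, zpow_zero,
    Finset.sum_const_zero, Finset.prod_const_one, one_mul]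

lemma rhoLM_zero_right_of_add_eq_zero (lam η φ : Fin n → ℤ) (hsum : η + φ = 0) :
    rhoLM n q qm d A lam 0 η φ = q ^ ((φ - η) ⬝ᵥ (of fun i j => d i * A i j) *ᵥ lam) := by
  have hsum' (j : Fin n) : φ j + η j = 0 := by simpa [add_comm] using congrFun hsum j
  rw [rhoLM, ← sum_sum_mul_eq_dotProduct_mulVec]
  simp only [hsum', Pi.sub_apply, Pi.zero_apply, mul_zero, zpow_zero, Finset.sum_const_zero,
    Finset.prod_const_one, mul_one]

end rhoLM

theorem stmt6_general {K : Type*} [Field K] (n : ℕ) (q : Kˣ) (qm : Fin n → Fin n → Kˣ)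
    (hind : ∀ (a : ℤ) (b : Fin n → Fin n → ℤ),
      q ^ a * ∏ i, ∏ j, (if i < j then qm i j ^ b i j else 1) = 1 →
      a = 0 ∧ ∀ i j, i < j → b i j = 0)
    (d : Fin n → ℤ)
    (A : Matrix (Fin n) (Fin n) ℤ)
    (hDA : (Matrix.of fun i j => d i * A i j).det ≠ 0)
    (η φ : Fin n → ℤ)
    (h : ∀ lam mu : Fin n → ℤ, rhoLM n q qm d A lam mu η φ = 1) :
    η = 0 ∧ φ = 0 := by
  have hq : ∀ a : ℤ, q ^ a = 1 → a = 0 := fun a ha => (hind a 0 (by simpa using ha)).1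
  have hnondeg := Matrix.nondegenerate_iff_det_ne_zero.mpr hDA
  have hsum : η + φ = 0 := hnondeg.eq_zero_of_ortho fun mu =>
    hq _ (by rw [← rhoLM_zero_left q qm]; exact h 0 mu)
  have hdiff : φ - η = 0 := hnondeg.eq_zero_of_ortho fun lam =>
    hq _ (by rw [← rhoLM_zero_right_of_add_eq_zero q qm d A lam η φ hsum]; exact h lam 0)
  refine ⟨funext fun j => ?_, funext fun j => ?_⟩ <;>
    have hs := congrFun hsum j <;> have hd := congrFun hdiff j <;>
    simp only [Pi.add_apply, Pi.sub_apply, Pi.zero_apply] at hs hd ⊢ <;> omega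

/-- if `ϱ^{λ,μ}(ω'_η ω_φ) = 1` for all `λ, μ`, then `η = φ = 0`. -/
theorem stmt6 {K : Type*} [Field K] (n : ℕ) (q : Kˣ) (qm : Fin n → Fin n → Kˣ)
    (hqdiag : ∀ i, qm i i = 1) (hqskew : ∀ i j, qm i j * qm j i = 1)
    (hind : ∀ (a : ℤ) (b : Fin n → Fin n → ℤ),
      q ^ a * ∏ i, ∏ j, (if i < j then qm i j ^ b i j else 1) = 1 →
      a = 0 ∧ ∀ i j, i < j → b i j = 0)
    (d : Fin n → ℤ) (hd : ∀ i, 0 < d i)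
    (A : Matrix (Fin n) (Fin n) ℤ) (hsym : ∀ i j, d i * A i j = d j * A j i)
    (hDA : (Matrix.of fun i j => d i * A i j).det ≠ 0)
    (η φ : Fin n → ℤ)
    (h : ∀ lam mu : Fin n → ℤ, rhoLM n q qm d A lam mu η φ = 1) :
    η = 0 ∧ φ = 0 :=
  stmt6_general n q qm hind d A hDA η φ h
end

section
/- Let H be a Hopf algebra, M a finite-dimensional H-module, and Θ ∈ End(M) invertible with Θ ∘ u = S²(u) ∘ Θ for all u ∈ H. Define t ∈ H* by t(v) = tr_M(v ∘ Θ). Then t is invariant under the (left-adjoint-transpose) action: (x · t)(u) := t(ad_l(S(x)) u) satisfies x · t = ε(x) t for all x ∈ H. -/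
/-!
Write `t(v) = tr(φ v ∘ Θ)`. Cycling `φ(y₁)` around the trace and moving it past `Θ` turns it into
`φ(S² y₁)`, so `t(ad_l(y) u) = Σ t(u S(y₂) S²(y₁)) = t(u S(S(y₁) y₂)) = ε(y) t(u)` for every `y`,
and `ε ∘ S = ε` gives the claim for `y = S x`.
-/

/-- The left adjoint action `ad_l(x)(z) = Σ x_{(1)} z S(x_{(2)})` in a Hopf algebra. -/
noncomputable def adl (K : Type*) {H : Type*} [CommRing K] [Ring H] [HopfAlgebra K H]
    (x z : H) : H :=
  LinearMap.mul' K H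
    ((TensorProduct.map (LinearMap.mulRight K z) (HopfAlgebra.antipode (R := K)))
      (Coalgebra.comul (R := K) x))

open Coalgebra HopfAlgebra

namespace HopfAlgebra

variable {R A : Type*} [CommSemiring R] [Semiring A] [HopfAlgebra R A]

lemma sum_antipode_mul_antipode_antipode_eq_algebraMap_counit {ι : Type*} {a : A}
    (repr : Repr R a ι) :
    ∑ i ∈ repr.index, antipode R (repr.right i) * antipode R (antipode R (repr.left i)) =
      algebraMap R A (counit a) := by
  simp_rw [← antipode_mul_antidistrib, ← map_sum, sum_antipode_mul_eq_algebraMap_counit,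
    Algebra.algebraMap_eq_smul_one, map_smul, antipode_one]

end HopfAlgebra

section AdjointAction

variable {K H : Type*} [CommRing K] [Ring H] [HopfAlgebra K H]

lemma adl_eq_sum {ι : Type*} {y : H} (repr : Repr K y ι) (u : H) :
    adl K y u = ∑ i ∈ repr.index, repr.left i * u * antipode K (repr.right i) := by
  simp [adl, ← repr.eq, map_sum]

variable {M : Type*} [AddCommMonoid M] [Module K M]
  {φ : H →ₐ[K] Module.End K M} {Θ : Module.End K M}

lemma trace_mul_comp_of_intertwines_antipode_sq
    (hΘ : ∀ u : H, Θ ∘ₗ φ u = φ (antipode K (antipode K u)) ∘ₗ Θ) (a : H) (f : Module.End K M) :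
    LinearMap.trace K M (φ a * f * Θ) =
      LinearMap.trace K M (f * φ (antipode K (antipode K a)) * Θ) := by
  rw [mul_assoc, LinearMap.trace_mul_comm, mul_assoc, Module.End.mul_eq_comp Θ, hΘ,
    ← Module.End.mul_eq_comp, mul_assoc]

lemma trace_adl_comp_of_intertwines_antipode_sq
    (hΘ : ∀ u : H, Θ ∘ₗ φ u = φ (antipode K (antipode K u)) ∘ₗ Θ) (y u : H) :
    LinearMap.trace K M (φ (adl K y u) ∘ₗ Θ) =
      counit (R := K) y * LinearMap.trace K M (φ u ∘ₗ Θ) := by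
  let r := ℛ K y
  simp only [← Module.End.mul_eq_comp]
  calc LinearMap.trace K M (φ (adl K y u) * Θ)
      = ∑ i ∈ r.index,
          LinearMap.trace K M (φ (r.left i) * (φ u * φ (antipode K (r.right i))) * Θ) := by
        simp only [adl_eq_sum r, map_sum, Finset.sum_mul, map_mul, mul_assoc]
    _ = ∑ i ∈ r.index, LinearMap.trace K M
          (φ u * φ (antipode K (r.right i)) * φ (antipode K (antipode K (r.left i))) * Θ) := by
        simp only [trace_mul_comp_of_intertwines_antipode_sq hΘ]
    _ = LinearMap.trace K M (φ u * φ (∑ i ∈ r.index,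
          antipode K (r.right i) * antipode K (antipode K (r.left i))) * Θ) := by
        simp only [map_sum, Finset.mul_sum, Finset.sum_mul, map_mul, mul_assoc]
    _ = counit (R := K) y * LinearMap.trace K M (φ u * Θ) := by
        rw [sum_antipode_mul_antipode_antipode_eq_algebraMap_counit, AlgHom.commutes,
          Algebra.algebraMap_eq_smul_one, mul_smul_one, smul_mul_assoc, map_smul, smul_eq_mul]

end AdjointAction

theorem stmt14_general {K H M : Type*} [Field K] [Ring H] [HopfAlgebra K H]
    [AddCommGroup M] [Module K M]
    (φ : H →ₐ[K] Module.End K M) (Θ : Module.End K M)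
    (hΘ : ∀ u : H, Θ ∘ₗ φ u =
      φ (HopfAlgebra.antipode (R := K) (HopfAlgebra.antipode (R := K) u)) ∘ₗ Θ) :
    ∀ x u : H,
      LinearMap.trace K M (φ (adl K (HopfAlgebra.antipode (R := K) x) u) ∘ₗ Θ) =
      Coalgebra.counit (R := K) x * LinearMap.trace K M (φ u ∘ₗ Θ) := by
  intro x u
  rw [trace_adl_comp_of_intertwines_antipode_sq hΘ, counit_antipode]

/-- if `Θ` is an invertible endomorphism of a finite-dimensional module `M`
intertwining the action with `S²`, then `t(v) = tr_M(v ∘ Θ)` satisfies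
`(x·t)(u) = t(ad_l(S(x)) u) = ε(x) t(u)`. -/
theorem stmt14 {K H M : Type*} [Field K] [Ring H] [HopfAlgebra K H]
    [AddCommGroup M] [Module K M] [FiniteDimensional K M]
    (φ : H →ₐ[K] Module.End K M) (Θ : Module.End K M)
    (hΘinv : Function.Bijective Θ)
    (hΘ : ∀ u : H, Θ ∘ₗ φ u =
      φ (HopfAlgebra.antipode (R := K) (HopfAlgebra.antipode (R := K) u)) ∘ₗ Θ) :
    ∀ x u : H,
      LinearMap.trace K M (φ (adl K (HopfAlgebra.antipode (R := K) x) u) ∘ₗ Θ) =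
      Coalgebra.counit (R := K) x * LinearMap.trace K M (φ u ∘ₗ Θ) :=
  stmt14_general φ Θ hΘ
end

section
/- Under the hypotheses of the Harish-Chandra setup for U_{q,G}(g): for λ ∈ Λ^+ ∩ Q, the Harish-Chandra image of the central element z_λ is ξ(z_λ) = Σ_{μ ≤ λ} dim(L(λ)_μ) ω'_μ ω_{-μ}, obtained from z_λ^0 = Σ_{μ≤λ} q^{-2(ρ,μ)} dim(L(λ)_μ) ω'_μ ω_{-μ} by applying the shift γ^{-ρ}(ω'_η ω_φ) = ϱ^{-ρ}(ω'_η ω_φ) ω'_η ω_φ, using ϱ^{-ρ}(ω'_μ ω_{-μ}) = q^{2(ρ,μ)}. -/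
/-! On the diagonal elements `ω'_μ ω_{-μ}` the factors `q_{ij}` of `ϱ^{-ρ}` carry the exponent
`η + φ = 0`, so only the power `q^{-2(μ, -ρ)} = q^{2(ρ, μ)}` survives (using the symmetry of `DA`).
The shift `γ^{-ρ}` acts diagonally on the basis, so on `z_λ⁰` it multiplies each coefficient
`q^{-2(ρ,μ)} dim L(λ)_μ` by `q^{2(ρ,μ)}`. -/

/-- `ϱ^{λ}(ω'_η ω_φ) = q^{(φ-η)ᵀDAλ} ∏_{i,j} q_{ij}^{-λ_i(η+φ)_j}`. -/
noncomputable def rhoL {K : Type*} [Field K] (n : ℕ) (q : Kˣ) (qm : Fin n → Fin n → Kˣ)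
    (d : Fin n → ℤ) (A : Matrix (Fin n) (Fin n) ℤ) (lam η φ : Fin n → ℤ) : Kˣ :=
  q ^ (∑ i, ∑ j, (φ i - η i) * (d i * A i j * lam j)) *
    ∏ i, ∏ j, qm i j ^ (-(lam i) * (η j + φ j))

lemma rhoL_neg_right {K : Type*} [Field K] (n : ℕ) (q : Kˣ) (qm : Fin n → Fin n → Kˣ)
    (d : Fin n → ℤ) (A : Matrix (Fin n) (Fin n) ℤ) (lam μ : Fin n → ℤ) :
    rhoL n q qm d A lam μ (-μ) = q ^ (-2 * ∑ i, ∑ j, μ i * (d i * A i j * lam j)) := by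
  simp only [rhoL, Pi.neg_apply, add_neg_cancel, mul_zero, zpow_zero, Finset.prod_const_one,
    mul_one, Finset.mul_sum]
  congr 1
  exact Finset.sum_congr rfl fun i _ => Finset.sum_congr rfl fun j _ => by ring

lemma sum_sum_symm_form_comm {n : ℕ} (d : Fin n → ℤ) (A : Matrix (Fin n) (Fin n) ℤ)
    (hsym : ∀ i j, d i * A i j = d j * A j i) (μ ν : Fin n → ℤ) :
    ∑ i, ∑ j, μ i * (d i * A i j * ν j) = ∑ i, ∑ j, ν i * (d i * A i j * μ j) := by
  rw [Finset.sum_comm]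
  refine Finset.sum_congr rfl fun i _ => Finset.sum_congr rfl fun j _ => ?_
  rw [hsym j i]
  ring

lemma Finsupp.sum_smul_single_rescale {α K ι : Type*} [CommSemiring K] (f : α → K)
    (s : Finset ι) (g : ι → α) (a : ι → K) :
    (∑ i ∈ s, a i • Finsupp.single (g i) (1 : K)).sum (fun p c => c • (f p • Finsupp.single p 1))
      = ∑ i ∈ s, (a i * f (g i)) • Finsupp.single (g i) (1 : K) := by
  rw [← Finsupp.linearCombination_apply, map_sum]
  refine Finset.sum_congr rfl fun i _ => ?_
  rw [map_smul, Finsupp.linearCombination_single, one_smul, smul_smul]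

theorem stmt19_general {K : Type*} [Field K] (n : ℕ) (q : Kˣ) (qm : Fin n → Fin n → Kˣ)
    (d : Fin n → ℤ)
    (A : Matrix (Fin n) (Fin n) ℤ) (hsym : ∀ i j, d i * A i j = d j * A j i)
    (ρ : Fin n → ℤ)
    (rp : (Fin n → ℤ) → ℤ) (hrp : ∀ μ, rp μ = ∑ i, ∑ j, ρ i * (d i * A i j * μ j))
    (Fs : Finset (Fin n → ℤ)) (dimL : (Fin n → ℤ) → ℕ)
    (z0 : ((Fin n → ℤ) × (Fin n → ℤ)) →₀ K)
    (hz0 : z0 = ∑ μ ∈ Fs,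
      (((q ^ (-(2 * rp μ)) : Kˣ) : K) * (dimL μ : K)) • Finsupp.single (μ, -μ) (1 : K))
    (γ : (((Fin n → ℤ) × (Fin n → ℤ)) →₀ K) → (((Fin n → ℤ) × (Fin n → ℤ)) →₀ K))
    (hγ : ∀ x, γ x = x.sum fun p c =>
      c • (((rhoL n q qm d A (-ρ) p.1 p.2 : Kˣ) : K) • Finsupp.single p (1 : K))) :
    (∀ μ : Fin n → ℤ, rhoL n q qm d A (-ρ) μ (-μ) = q ^ (2 * rp μ)) ∧
    γ z0 = ∑ μ ∈ Fs, ((dimL μ : K)) • Finsupp.single (μ, -μ) (1 : K) := by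
  have hdiag : ∀ μ : Fin n → ℤ, rhoL n q qm d A (-ρ) μ (-μ) = q ^ (2 * rp μ) := by
    intro μ
    rw [rhoL_neg_right, sum_sum_symm_form_comm d A hsym, hrp]
    simp only [Pi.neg_apply, neg_mul, Finset.sum_neg_distrib, mul_neg, neg_neg]
  refine ⟨hdiag, ?_⟩
  rw [hγ, hz0, Finsupp.sum_smul_single_rescale]
  refine Finset.sum_congr rfl fun μ _ => ?_
  rw [hdiag, mul_right_comm, ← Units.val_mul, ← zpow_add, neg_add_cancel, zpow_zero,
    Units.val_one, one_mul]

/-- `ϱ^{-ρ}(ω'_μ ω_{-μ}) = q^{2(ρ,μ)}`, and applying the shift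
`γ^{-ρ}(ω'_η ω_φ) = ϱ^{-ρ}(ω'_η ω_φ) ω'_η ω_φ` to
`z_λ⁰ = Σ_{μ≤λ} q^{-2(ρ,μ)} dim(L(λ)_μ) ω'_μ ω_{-μ}` yields
`ξ(z_λ) = Σ_{μ≤λ} dim(L(λ)_μ) ω'_μ ω_{-μ}`. -/
theorem stmt19 {K : Type*} [Field K] (n : ℕ) (q : Kˣ) (qm : Fin n → Fin n → Kˣ)
    (hqdiag : ∀ i, qm i i = 1) (hqskew : ∀ i j, qm i j * qm j i = 1)
    (d : Fin n → ℤ) (hd : ∀ i, 0 < d i)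
    (A : Matrix (Fin n) (Fin n) ℤ) (hsym : ∀ i j, d i * A i j = d j * A j i)
    (ρ : Fin n → ℤ)
    (rp : (Fin n → ℤ) → ℤ) (hrp : ∀ μ, rp μ = ∑ i, ∑ j, ρ i * (d i * A i j * μ j))
    (Fs : Finset (Fin n → ℤ)) (dimL : (Fin n → ℤ) → ℕ)
    (z0 : ((Fin n → ℤ) × (Fin n → ℤ)) →₀ K)
    (hz0 : z0 = ∑ μ ∈ Fs,
      (((q ^ (-(2 * rp μ)) : Kˣ) : K) * (dimL μ : K)) • Finsupp.single (μ, -μ) (1 : K))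
    (γ : (((Fin n → ℤ) × (Fin n → ℤ)) →₀ K) → (((Fin n → ℤ) × (Fin n → ℤ)) →₀ K))
    (hγ : ∀ x, γ x = x.sum fun p c =>
      c • (((rhoL n q qm d A (-ρ) p.1 p.2 : Kˣ) : K) • Finsupp.single p (1 : K))) :
    (∀ μ : Fin n → ℤ, rhoL n q qm d A (-ρ) μ (-μ) = q ^ (2 * rp μ)) ∧
    γ z0 = ∑ μ ∈ Fs, ((dimL μ : K)) • Finsupp.single (μ, -μ) (1 : K) :=
  stmt19_general n q qm d A hsym ρ rp hrp Fs dimL z0 hz0 γ hγ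
end
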